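/- For every smooth compactly supported φ : ℝ → ℝ one has the exact expansion of the energy about the kink: ∫_ℝ [(1/2)·(Φ_S + φ)'(x)² + U(Φ_S(x) + φ(x))] dx = 4m³/(3g²) + ∫_ℝ (1/2)·[φ'(x)² + 4m²·φ(x)² − 6m²·sech²(m·x)·φ(x)²] dx + ∫_ℝ [2mg·tanh(m·x)·φ(x)³ + (g²/2)·φ(x)⁴] dx. -/

import Mathlib

open MeasureTheory

noncomputable def sech (x : ℝ) : ℝ := 1 / Real.cosh x

section auxiliary

open Filter Real Set Topology

lemma tanh_sq_add_sech_sq (x : ℝ) : Real.tanh x ^ 2 + sech x ^ 2 = 1 := by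
  have h := Real.cosh_pos x
  rw [Real.tanh_eq_sinh_div_cosh, sech]
  field_simp
  nlinarith [Real.cosh_sq_sub_sinh_sq x]

lemma hasDerivAt_tanh (x : ℝ) : HasDerivAt Real.tanh (sech x ^ 2) x := by
  have h := Real.cosh_pos x
  have hd := (Real.hasDerivAt_sinh x).div (Real.hasDerivAt_cosh x) h.ne'
  have he : Real.tanh = fun y => Real.sinh y / Real.cosh y := by
    funext y; exact Real.tanh_eq_sinh_div_cosh y
  rw [he]
  refine hd.congr_deriv ?_
  rw [sech]
  field_simp
  nlinarith [Real.cosh_sq_sub_sinh_sq x]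

lemma tendsto_tanh_atTop : Tendsto Real.tanh atTop (𝓝 1) := by
  have key : ∀ x : ℝ, Real.tanh x = 1 - 2 / (Real.exp x ^ 2 + 1) := by
    intro x
    have h1 : (Real.exp x) ≠ 0 := (Real.exp_pos x).ne'
    have h2 : Real.exp x ^ 2 + 1 ≠ 0 := by positivity
    have h3 : Real.exp x + (Real.exp x)⁻¹ ≠ 0 := by positivity
    rw [Real.tanh_eq_sinh_div_cosh, Real.sinh_eq, Real.cosh_eq, Real.exp_neg]
    field_simp
    ring
  have hexp : Tendsto (fun x : ℝ => Real.exp x ^ 2 + 1) atTop atTop := by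
    apply tendsto_atTop_add_const_right
    have := Real.tendsto_exp_atTop.atTop_mul_atTop₀ Real.tendsto_exp_atTop
    simpa [pow_two] using this
  have h0 : Tendsto (fun x : ℝ => 2 / (Real.exp x ^ 2 + 1)) atTop (𝓝 0) :=
    Tendsto.div_atTop tendsto_const_nhds hexp
  have : Tendsto (fun x : ℝ => 1 - 2 / (Real.exp x ^ 2 + 1)) atTop (𝓝 (1 - 0)) := tendsto_const_nhds.sub h0
  rw [sub_zero] at this
  exact this.congr fun x => (key x).symm

lemma tendsto_tanh_atBot : Tendsto Real.tanh atBot (𝓝 (-1)) := by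
  have h := (tendsto_tanh_atTop.comp tendsto_neg_atBot_atTop).neg
  simp only [Function.comp] at h
  have : Tendsto (fun x : ℝ => -Real.tanh (-x)) atBot (𝓝 (-1)) := h
  exact this.congr fun x => by rw [Real.tanh_neg, neg_neg]

section sech4
variable {m : ℝ} (hm : 0 < m)

lemma hasDerivAt_K (hm : 0 < m) (x : ℝ) :
    HasDerivAt (fun x => (Real.tanh (m*x) - Real.tanh (m*x)^3/3)/m) (sech (m*x)^4) x := by
  have hmx : HasDerivAt (fun y : ℝ => m*y) m x := by simpa using (hasDerivAt_id x).const_mul m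
  have ht : HasDerivAt (fun y : ℝ => Real.tanh (m*y)) (sech (m*x)^2 * m) x :=
    (hasDerivAt_tanh (m*x)).comp x hmx
  have h := (ht.sub ((ht.pow 3).div_const 3)).div_const m
  refine h.congr_deriv ?_
  have htan : Real.tanh (m*x)^2 = 1 - sech (m*x)^2 := by
    linarith [tanh_sq_add_sech_sq (m*x)]
  field_simp [hm.ne']
  linear_combination (-(3*sech (m*x)^2)) * htan

lemma tendstoK_top (hm : 0 < m) :
    Tendsto (fun x => (Real.tanh (m*x) - Real.tanh (m*x)^3/3)/m) atTop (𝓝 ((1 - 1/3)/m)) := by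
  have h1 : Tendsto (fun x : ℝ => Real.tanh (m*x)) atTop (𝓝 1) :=
    tendsto_tanh_atTop.comp (tendsto_id.const_mul_atTop hm)
  have := ((h1.sub ((h1.pow 3).div_const 3)).div_const m)
  simpa using this

lemma tendstoK_bot (hm : 0 < m) :
    Tendsto (fun x => (Real.tanh (m*x) - Real.tanh (m*x)^3/3)/m) atBot (𝓝 ((-1 + 1/3)/m)) := by
  have h1 : Tendsto (fun x : ℝ => Real.tanh (m*x)) atBot (𝓝 (-1)) :=
    tendsto_tanh_atBot.comp (tendsto_id.const_mul_atBot hm)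
  have := ((h1.sub ((h1.pow 3).div_const 3)).div_const m)
  have e : ((-1 : ℝ) - (-1)^3/3)/m = (-1 + 1/3)/m := by norm_num
  rw [← e]; exact this

lemma integrable_sech4 (hm : 0 < m) : Integrable (fun x => sech (m*x)^4) := by
  have hIoi : IntegrableOn (fun x => sech (m*x)^4) (Ioi 0) := by
    apply integrableOn_Ioi_deriv_of_nonneg' (fun x _ => hasDerivAt_K hm x)
      (fun x _ => by positivity) (tendstoK_top hm)
  have hIic : IntegrableOn (fun x => sech (m*x)^4) (Iic 0) := by
    rw [← Measure.map_neg_eq_self (volume : Measure ℝ)]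
    have A : MeasurableEmbedding fun x : ℝ => -x :=
      (Homeomorph.neg ℝ).measurableEmbedding
    rw [A.integrableOn_map_iff]
    have : ((fun x => sech (m*x)^4) ∘ fun x : ℝ => -x) = fun x => sech (m*x)^4 := by
      funext x
      simp only [Function.comp, sech, mul_neg, Real.cosh_neg]
    rw [this]
    simp only [neg_preimage, neg_Iic, neg_zero]
    exact (integrableOn_Ici_iff_integrableOn_Ioi).mpr hIoi
  have := hIic.union hIoi
  rwa [Iic_union_Ioi, integrableOn_univ] at this

lemma integral_sech4 (hm : 0 < m) : ∫ x : ℝ, sech (m*x)^4 = 4/(3*m) := by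
  have := integral_of_hasDerivAt_of_tendsto (hasDerivAt_K hm) (integrable_sech4 hm)
    (tendstoK_bot hm) (tendstoK_top hm)
  rw [this]; ring

end sech4


end auxiliary

open Filter Real Set Topology in
/-- Exact expansion of the classical energy about the kink `Φ_S(x) = (m/g)·tanh(m·x)`:
for every smooth compactly supported perturbation `φ`,
the total energy of `Φ_S + φ` equals the classical mass `4m³/(3g²)` plus the
quadratic fluctuation energy (with potential `−6m²·sech²(m·x)`) plus the cubic and
quartic interaction terms. -/
theorem energy_expansion_about_kink (m g : ℝ) (hm : 0 < m) (hg : 0 < g)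
    (φ : ℝ → ℝ) (hφ : ContDiff ℝ (⊤ : ℕ∞) φ) (hsupp : HasCompactSupport φ) :
    (∫ x : ℝ, ((1 / 2) * (deriv (fun y : ℝ => (m / g) * Real.tanh (m * y) + φ y) x) ^ 2
        + (g ^ 2 / 2) * (((m / g) * Real.tanh (m * x) + φ x) ^ 2 - m ^ 2 / g ^ 2) ^ 2))
      = 4 * m ^ 3 / (3 * g ^ 2)
        + (∫ x : ℝ, (1 / 2) * ((deriv φ x) ^ 2 + 4 * m ^ 2 * (φ x) ^ 2
            - 6 * m ^ 2 * (sech (m * x)) ^ 2 * (φ x) ^ 2))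
        + ∫ x : ℝ, (2 * m * g * Real.tanh (m * x) * (φ x) ^ 3
            + (g ^ 2 / 2) * (φ x) ^ 4) := by
  have hg' : g ≠ 0 := hg.ne'
  have hφd : ∀ x, HasDerivAt φ (deriv φ x) x :=
    fun x => ((hφ.differentiable (by simp)) x).hasDerivAt
  have hcd : Continuous (deriv φ) := hφ.continuous_deriv (by simp)
  have hcφ : Continuous φ := hφ.continuous
  have hmx : ∀ x : ℝ, HasDerivAt (fun y : ℝ => m*y) m x :=
    fun x => by simpa using (hasDerivAt_id x).const_mul m
  have hcsech : Continuous (fun x : ℝ => sech (m*x)) := by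
    simp only [sech]
    exact continuous_const.div (Real.continuous_cosh.comp (continuous_const.mul continuous_id))
      (fun x => (Real.cosh_pos _).ne')
  have hctanh0 : Continuous Real.tanh :=
    (Real.continuous_sinh.div Real.continuous_cosh fun x => (Real.cosh_pos x).ne').congr
      fun x => (Real.tanh_eq_sinh_div_cosh x).symm
  have hctanh : Continuous (fun x : ℝ => Real.tanh (m*x)) :=
    hctanh0.comp (continuous_const.mul continuous_id)
  -- the four pieces
  set F : ℝ → ℝ := fun x => m^4/g^2 * sech (m*x)^4 with hF
  set L : ℝ → ℝ := fun x => (m^2/g) * sech (m*x)^2 * deriv φ x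
      - (2*m^3/g) * Real.tanh (m*x) * sech (m*x)^2 * φ x with hL
  set Q : ℝ → ℝ := fun x => (1 / 2) * ((deriv φ x) ^ 2 + 4 * m ^ 2 * (φ x) ^ 2
      - 6 * m ^ 2 * (sech (m * x)) ^ 2 * (φ x) ^ 2) with hQ
  set I : ℝ → ℝ := fun x => (2 * m * g * Real.tanh (m * x) * (φ x) ^ 3
      + (g ^ 2 / 2) * (φ x) ^ 4) with hI
  -- integrability
  have hFint : Integrable F := (integrable_sech4 hm).const_mul _
  have hKcpt : IsCompact (tsupport φ ∪ tsupport (deriv φ)) :=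
    hsupp.isCompact.union hsupp.deriv.isCompact
  have hzero : ∀ x, x ∉ tsupport φ ∪ tsupport (deriv φ) → φ x = 0 ∧ deriv φ x = 0 := by
    intro x hx
    exact ⟨image_eq_zero_of_notMem_tsupport (fun h => hx (Or.inl h)),
      image_eq_zero_of_notMem_tsupport (fun h => hx (Or.inr h))⟩
  have hLint : Integrable L := by
    apply Continuous.integrable_of_hasCompactSupport
    · fun_prop (disch := exact fun x => (Real.cosh_pos _).ne')
    · exact HasCompactSupport.intro hKcpt (fun x hx => by
        obtain ⟨h1, h2⟩ := hzero x hx; simp [hL, h1, h2])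
  have hQint : Integrable Q := by
    apply Continuous.integrable_of_hasCompactSupport
    · fun_prop (disch := exact fun x => (Real.cosh_pos _).ne')
    · exact HasCompactSupport.intro hKcpt (fun x hx => by
        obtain ⟨h1, h2⟩ := hzero x hx; simp [hQ, h1, h2])
  have hIint : Integrable I := by
    apply Continuous.integrable_of_hasCompactSupport
    · fun_prop (disch := exact fun x => (Real.cosh_pos _).ne')
    · exact HasCompactSupport.intro hKcpt (fun x hx => by
        obtain ⟨h1, h2⟩ := hzero x hx; simp [hI, h1])
  -- pointwise identity
  have key : ∀ x : ℝ, (1 / 2) * (deriv (fun y : ℝ => (m / g) * Real.tanh (m * y) + φ y) x) ^ 2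
        + (g ^ 2 / 2) * (((m / g) * Real.tanh (m * x) + φ x) ^ 2 - m ^ 2 / g ^ 2) ^ 2
      = F x + (L x + (Q x + I x)) := by
    intro x
    have ht : HasDerivAt (fun y : ℝ => Real.tanh (m*y)) (sech (m*x)^2 * m) x :=
      (hasDerivAt_tanh (m*x)).comp x (hmx x)
    have hsum : HasDerivAt (fun y : ℝ => (m/g) * Real.tanh (m*y) + φ y)
        ((m/g) * (sech (m*x)^2 * m) + deriv φ x) x := (ht.const_mul (m/g)).add (hφd x)
    rw [hsum.deriv]
    have hTS := tanh_sq_add_sech_sq (m*x)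
    simp only [hF, hL, hQ, hI]
    set T := Real.tanh (m*x)
    set S := sech (m*x)
    set p := φ x
    set d := deriv φ x
    field_simp
    linear_combination (4*m^2*g^2*p^2 + 2*m^2*(-m^2*S^2 + 2*m*g*T*p + g^2*p^2) + m^4*(T^2+S^2-1)) * hTS
  -- ∫ L = 0
  have hL0 : ∫ x, L x = 0 := by
    set G : ℝ → ℝ := fun x => (m^2/g) * ((Real.cosh (m*x)^2)⁻¹ * φ x) with hG
    have hGd : ∀ x, HasDerivAt G (L x) x := by
      intro x
      have hc : HasDerivAt (fun y : ℝ => Real.cosh (m*y)) (Real.sinh (m*x) * m) x :=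
        (Real.hasDerivAt_cosh (m*x)).comp x (hmx x)
      have hc2 := hc.pow 2
      have hinv := hc2.inv (pow_ne_zero 2 (Real.cosh_pos _).ne')
      have hfin := (hinv.mul (hφd x)).const_mul (m^2/g)
      refine hfin.congr_deriv ?_
      have hco := (Real.cosh_pos (m*x)).ne'
      simp only [hL, sech, Real.tanh_eq_sinh_div_cosh, Pi.pow_apply, Pi.inv_apply]
      field_simp
      ring
    have hGcs : HasCompactSupport G :=
      HasCompactSupport.intro hsupp.isCompact (fun x hx => by
        simp [hG, image_eq_zero_of_notMem_tsupport hx])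
    obtain ⟨r, hr⟩ := hGcs.isCompact.isBounded.subset_closedBall 0
    have htop : Tendsto G atTop (𝓝 0) := by
      have hev : ∀ᶠ x in atTop, (0:ℝ) = G x := by
        filter_upwards [eventually_gt_atTop r] with x hx
        refine (image_eq_zero_of_notMem_tsupport fun hmem => ?_).symm
        have := hr hmem
        rw [Metric.mem_closedBall, Real.dist_eq, sub_zero] at this
        exact absurd ((le_abs_self x).trans this) (not_le.mpr hx)
      exact Tendsto.congr' hev tendsto_const_nhds
    have hbot : Tendsto G atBot (𝓝 0) := by
      have hev : ∀ᶠ x in atBot, (0:ℝ) = G x := by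
        filter_upwards [eventually_lt_atBot (-r)] with x hx
        refine (image_eq_zero_of_notMem_tsupport fun hmem => ?_).symm
        have := hr hmem
        rw [Metric.mem_closedBall, Real.dist_eq, sub_zero] at this
        exact absurd ((neg_le_abs x).trans this) (not_le.mpr (by linarith))
      exact Tendsto.congr' hev tendsto_const_nhds
    have := integral_of_hasDerivAt_of_tendsto hGd hLint hbot htop
    simpa using this
  -- ∫ F
  have hFval : ∫ x, F x = 4 * m ^ 3 / (3 * g ^ 2) := by
    simp only [hF]
    rw [integral_const_mul, integral_sech4 hm]
    field_simp
  calc (∫ x : ℝ, ((1 / 2) * (deriv (fun y : ℝ => (m / g) * Real.tanh (m * y) + φ y) x) ^ 2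
        + (g ^ 2 / 2) * (((m / g) * Real.tanh (m * x) + φ x) ^ 2 - m ^ 2 / g ^ 2) ^ 2))
      = ∫ x : ℝ, (F x + (L x + (Q x + I x))) := by
        exact integral_congr_ae (Filter.Eventually.of_forall key)
    _ = (∫ x, F x) + ((∫ x, L x) + ((∫ x, Q x) + ∫ x, I x)) := by
        have hQI : Integrable (fun x => Q x + I x) := hQint.add hIint
        have hLQI : Integrable (fun x => L x + (Q x + I x)) := hLint.add hQI
        rw [integral_add hFint hLQI, integral_add hLint hQI, integral_add hQint hIint]
    _ = 4 * m ^ 3 / (3 * g ^ 2) + ((∫ x, Q x) + ∫ x, I x) := by rw [hFval, hL0, zero_add]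
    _ = _ := by rw [← add_assoc]
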